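/- arXiv:1808.09583 — 2 statements merged into one kernel-verified Lean document; each statement's English description precedes it below -/
import Mathlib

section
/- Let $n\ge 2$, $\alpha\in(0,n)$, and $j\in\mathbb{N}$. Then there exists a set $A_j\subset\{0,1,\dots,2^j-1\}^n$ of cardinality $\lfloor 2^{j\alpha}\rfloor$ and a constant $\widetilde C\ge 1$ depending only on $n$ and $\alpha$ (independent of $j$) such that for every $J\in\{0,\dots,j\}$: (i) $\lfloor 2^{(j-J)\alpha}\rfloor \le |\{m\in A_j:\ Q_{j,m}\subset Q_{J,0}\}| \le \widetilde C\,2^{(j-J)\alpha}$, and (ii) for every $K\in\{0,\dots,2^J-1\}^n$, $|\{m\in A_j:\ Q_{j,m}\subset Q_{J,K}\}| \le 2\,|\{m\in A_j:\ Q_{j,m}\subset Q_{J,0}\}|$. -/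
/-!
Choose integers `P t` with `2 ^ (t α) ≤ P t ≤ 2 · 2 ^ (t α)` such that each `P (t + 1)` is a
multiple `c t · P t` of the previous one; then `c t ≤ 2 ^ α ≤ 2 ^ n`. Writing `k < P j` in the
mixed radix `(c 0, …, c (j-1))` and spelling the digit of level `s` as a `0/1`-vector placed at
scale `2 ^ s` gives an injective map into `{0, …, 2 ^ j - 1}ⁿ`, and `A` is the image of the first
`⌊2 ^ (j α)⌋` integers. With `t = j - J`, the first `P t` integers land in `Q_{J,0}`, whereas
reduction modulo `2 ^ t` is injective on the points of any `Q_{J,K}` and lands in the image of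
the first `P t` integers. So every `Q_{J,K}` holds at most as many points of `A` as `Q_{J,0}`,
which holds `min (#A) (P t)` of them.
-/

/-- The dyadic cube `Q_{j,m} = 2^{-j}([0,1)ⁿ + m)`. -/
def dyadicCube (n : ℕ) (j : ℕ) (m : Fin n → ℤ) : Set (Fin n → ℝ) :=
  {x | ∀ i, (m i : ℝ) ≤ 2 ^ j * x i ∧ 2 ^ j * x i < m i + 1}

open Finset

namespace SparseDyadic

section Cubes

variable {n j J : ℕ} {m K : Fin n → ℤ}

lemma mem_dyadicCube_iff {x : Fin n → ℝ} : x ∈ dyadicCube n j m ↔ ∀ i, ⌊2 ^ j * x i⌋ = m i := by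
  simp only [dyadicCube, Set.mem_ofPred_eq, Int.floor_eq_iff]

lemma dyadicCube_nonempty : (dyadicCube n j m).Nonempty :=
  ⟨fun i => m i / 2 ^ j, mem_dyadicCube_iff.2 fun i => by
    rw [mul_div_cancel₀ _ (by positivity), Int.floor_intCast]⟩

lemma floor_two_pow_mul_eq_ediv (hJ : J ≤ j) (y : ℝ) :
    ⌊2 ^ J * y⌋ = ⌊2 ^ j * y⌋ / 2 ^ (j - J) := by
  have h : (2 : ℝ) ^ J * y = 2 ^ j * y / ((2 ^ (j - J) : ℕ) : ℝ) := by
    rw [Nat.cast_pow, Nat.cast_ofNat, ← pow_sub_mul_pow 2 hJ]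
    field_simp
  rw [h, Int.floor_div_natCast]
  norm_cast

lemma dyadicCube_subset_dyadicCube_iff (hJ : J ≤ j) :
    dyadicCube n j m ⊆ dyadicCube n J K ↔ ∀ i, m i / 2 ^ (j - J) = K i := by
  have hmem : ∀ x ∈ dyadicCube n j m, x ∈ dyadicCube n J K ↔ ∀ i, m i / 2 ^ (j - J) = K i := by
    intro x hx
    simp only [mem_dyadicCube_iff, floor_two_pow_mul_eq_ediv hJ] at hx ⊢
    simp only [hx]
  obtain ⟨x, hx⟩ := dyadicCube_nonempty (n := n) (j := j) (m := m)
  exact ⟨fun h => (hmem x hx).1 (h hx), fun h y hy => (hmem y hy).2 h⟩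

end Cubes

section BlockSize

variable (α : ℝ)

noncomputable def blockSize : ℕ → ℕ
  | 0 => 1
  | t + 1 => blockSize t * ⌈(2 : ℝ) ^ (((t + 1 : ℕ) : ℝ) * α) / blockSize t⌉₊

noncomputable def branching (t : ℕ) : ℕ :=
  ⌈(2 : ℝ) ^ (((t + 1 : ℕ) : ℝ) * α) / blockSize α t⌉₊

lemma blockSize_succ (t : ℕ) : blockSize α (t + 1) = blockSize α t * branching α t := rfl

lemma blockSize_pos (t : ℕ) : 0 < blockSize α t := by
  induction t with
  | zero => exact Nat.one_pos
  | succ t ih =>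
    rw [blockSize_succ]
    exact Nat.mul_pos ih (Nat.ceil_pos.2 (by positivity))

lemma blockSize_dvd {t s : ℕ} (hts : t ≤ s) : blockSize α t ∣ blockSize α s := by
  induction s, hts using Nat.le_induction with
  | base => exact dvd_rfl
  | succ s _ ih => exact ih.trans (Dvd.intro _ (blockSize_succ α s).symm)

lemma blockSize_le_blockSize {t s : ℕ} (hts : t ≤ s) : blockSize α t ≤ blockSize α s :=
  Nat.le_of_dvd (blockSize_pos α s) (blockSize_dvd α hts)

lemma two_rpow_le_blockSize (t : ℕ) : (2 : ℝ) ^ ((t : ℝ) * α) ≤ blockSize α t := by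
  cases t with
  | zero => simp [blockSize]
  | succ t =>
    have hP : (0 : ℝ) < blockSize α t := by exact_mod_cast blockSize_pos α t
    rw [blockSize_succ, Nat.cast_mul, ← div_le_iff₀' hP]
    exact Nat.le_ceil _

lemma floor_two_rpow_le_blockSize (t : ℕ) : ⌊(2 : ℝ) ^ ((t : ℝ) * α)⌋₊ ≤ blockSize α t :=
  Nat.floor_le_of_le (two_rpow_le_blockSize α t)

variable {α}

lemma blockSize_le (hα : 0 ≤ α) (t : ℕ) : (blockSize α t : ℝ) ≤ 2 * 2 ^ ((t : ℝ) * α) := by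
  induction t with
  | zero => norm_num [blockSize]
  | succ t ih =>
    have hP : (0 : ℝ) < blockSize α t := by exact_mod_cast blockSize_pos α t
    set x := (2 : ℝ) ^ (((t + 1 : ℕ) : ℝ) * α) / blockSize α t
    -- the ratio is at least `2 ^ α / 2 ≥ 1 / 2`, so rounding it up at most doubles it
    have hx : 2⁻¹ ≤ x := by
      rw [le_div_iff₀ hP]
      calc 2⁻¹ * (blockSize α t : ℝ) ≤ 2 ^ ((t : ℝ) * α) := by linarith
        _ ≤ 2 ^ (((t + 1 : ℕ) : ℝ) * α) := by gcongr <;> norm_num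
    calc (blockSize α (t + 1) : ℝ) = blockSize α t * (⌈x⌉₊ : ℝ) := by
          rw [blockSize_succ, Nat.cast_mul]; rfl
      _ ≤ blockSize α t * (2 * x) := by gcongr; exact Nat.ceil_le_two_mul hx
      _ = 2 * 2 ^ (((t + 1 : ℕ) : ℝ) * α) := by simp only [x]; field_simp

lemma branching_le_two_pow {n : ℕ} (hαn : α ≤ n) (t : ℕ) : branching α t ≤ 2 ^ n := by
  have hP : (0 : ℝ) < blockSize α t := by exact_mod_cast blockSize_pos α t
  refine Nat.ceil_le.2 ?_
  calc (2 : ℝ) ^ (((t + 1 : ℕ) : ℝ) * α) / blockSize α t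
      ≤ 2 ^ (((t + 1 : ℕ) : ℝ) * α) / 2 ^ ((t : ℝ) * α) := by
        gcongr; exact two_rpow_le_blockSize α t
    _ = 2 ^ α := by rw [← Real.rpow_sub two_pos]; push_cast; ring_nf
    _ ≤ 2 ^ (n : ℝ) := by gcongr; norm_num
    _ = ((2 ^ n : ℕ) : ℝ) := by norm_num

end BlockSize

section Points

def bitVector (n r : ℕ) : Fin n → ℤ := fun i => if r.testBit i then 1 else 0

lemma bitVector_zero (n : ℕ) : bitVector n 0 = 0 := funext fun i => by simp [bitVector]

lemma bitVector_nonneg_and_le_one (n r : ℕ) (i : Fin n) :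
    0 ≤ bitVector n r i ∧ bitVector n r i ≤ 1 := by
  unfold bitVector; split <;> norm_num

lemma bitVector_injOn (n : ℕ) : Set.InjOn (bitVector n) (Set.Iio (2 ^ n)) := by
  intro r hr r' hr' h
  refine Nat.eq_of_testBit_eq fun i => ?_
  by_cases hi : i < n
  · have := congrFun h ⟨i, hi⟩
    simp only [bitVector] at this
    split_ifs at this <;> simp_all
  · have h2 : 2 ^ n ≤ 2 ^ i := Nat.pow_le_pow_right two_pos (not_lt.1 hi)
    rw [Nat.testBit_eq_false_of_lt (lt_of_lt_of_le hr h2),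
      Nat.testBit_eq_false_of_lt (lt_of_lt_of_le hr' h2)]

variable (n : ℕ) (α : ℝ)

-- `k` is written in the mixed radix `(branching α s)ₛ`; its digit of weight `blockSize α s`
-- becomes the `s`-th binary digit of the coordinates, through its bit vector.
noncomputable def sparsePoint : ℕ → ℕ → Fin n → ℤ
  | 0, _ => 0
  | s + 1, k => sparsePoint s (k % blockSize α s) + (2 : ℤ) ^ s • bitVector n (k / blockSize α s)

variable {n α}

lemma sparsePoint_mem (s k : ℕ) (i : Fin n) :
    0 ≤ sparsePoint n α s k i ∧ sparsePoint n α s k i < 2 ^ s := by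
  induction s generalizing k with
  | zero => simp [sparsePoint]
  | succ s ih =>
    obtain ⟨h0, h1⟩ := ih (k % blockSize α s)
    obtain ⟨b0, b1⟩ := bitVector_nonneg_and_le_one n (k / blockSize α s) i
    simp only [sparsePoint, Pi.add_apply, Pi.smul_apply, smul_eq_mul, pow_succ]
    constructor <;> nlinarith

lemma sparsePoint_succ_ediv_emod (s k : ℕ) (i : Fin n) :
    sparsePoint n α (s + 1) k i / 2 ^ s = bitVector n (k / blockSize α s) i ∧
      sparsePoint n α (s + 1) k i % 2 ^ s = sparsePoint n α s (k % blockSize α s) i :=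
  (Int.ediv_emod_unique (by positivity)).2 ⟨rfl, sparsePoint_mem s _ i⟩

lemma sparsePoint_of_lt {t s k : ℕ} (hts : t ≤ s) (hk : k < blockSize α t) :
    sparsePoint n α s k = sparsePoint n α t k := by
  induction s, hts using Nat.le_induction with
  | base => rfl
  | succ s hts ih =>
    have hks : k < blockSize α s := hk.trans_le (blockSize_le_blockSize α hts)
    rw [sparsePoint, Nat.mod_eq_of_lt hks, Nat.div_eq_of_lt hks, bitVector_zero, smul_zero,
      add_zero, ih]

lemma sparsePoint_emod {t s k : ℕ} (hts : t ≤ s) (hk : k < blockSize α s) (i : Fin n) :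
    sparsePoint n α s k i % 2 ^ t = sparsePoint n α t (k % blockSize α t) i := by
  induction s, hts using Nat.le_induction generalizing k with
  | base =>
    rw [Nat.mod_eq_of_lt hk]
    exact Int.emod_eq_of_lt (sparsePoint_mem t k i).1 (sparsePoint_mem t k i).2
  | succ s hts ih =>
    rw [← Int.emod_emod_of_dvd _ (pow_dvd_pow (2 : ℤ) hts),
      (sparsePoint_succ_ediv_emod s k i).2, ih (Nat.mod_lt _ (blockSize_pos α s)),
      Nat.mod_mod_of_dvd _ (blockSize_dvd α hts)]

lemma sparsePoint_injOn (hαn : α ≤ n) (s : ℕ) :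
    Set.InjOn (sparsePoint n α s) (Set.Iio (blockSize α s)) := by
  induction s with
  | zero => intro k hk k' hk' _; simp_all [blockSize]
  | succ s ih =>
    intro k hk k' hk' h
    have hP := blockSize_pos α s
    have hdigit : ∀ {k}, k < blockSize α (s + 1) → k / blockSize α s < 2 ^ n := fun hk =>
      ((Nat.div_lt_iff_lt_mul hP).2 (by rwa [mul_comm, ← blockSize_succ])).trans_le
        (branching_le_two_pow hαn s)
    have hhigh : k / blockSize α s = k' / blockSize α s := bitVector_injOn n (hdigit hk)
      (hdigit hk') (funext fun i => by
        rw [← (sparsePoint_succ_ediv_emod s k i).1, ← (sparsePoint_succ_ediv_emod s k' i).1, h])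
    have hlow : k % blockSize α s = k' % blockSize α s := ih (Nat.mod_lt _ hP)
      (Nat.mod_lt _ hP) (funext fun i => by
        rw [← (sparsePoint_succ_ediv_emod s k i).2, ← (sparsePoint_succ_ediv_emod s k' i).2, h])
    rw [← Nat.div_add_mod k (blockSize α s), ← Nat.div_add_mod k' (blockSize α s), hhigh, hlow]

end Points

section SparseSet

variable (n : ℕ) (α : ℝ)

noncomputable def sparseSet (j N : ℕ) : Finset (Fin n → ℤ) := (range N).image (sparsePoint n α j)

variable {n α} {j N : ℕ}

lemma mem_box_of_mem_sparseSet {m : Fin n → ℤ} (hm : m ∈ sparseSet n α j N) (i : Fin n) :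
    0 ≤ m i ∧ m i < 2 ^ j := by
  obtain ⟨k, -, rfl⟩ := mem_image.1 hm
  exact sparsePoint_mem j k i

lemma card_sparseSet (hαn : α ≤ n) (hN : N ≤ blockSize α j) : #(sparseSet n α j N) = N := by
  rw [sparseSet, card_image_of_injOn, card_range]
  exact (sparsePoint_injOn hαn j).mono fun k hk => (mem_range.1 hk).trans_le hN

lemma min_le_card_filter_sparseSet (hαn : α ≤ n) (hN : N ≤ blockSize α j) {t : ℕ} (ht : t ≤ j) :
    min N (blockSize α t) ≤ #((sparseSet n α j N).filter fun m => ∀ i, m i / 2 ^ t = 0) := by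
  have hsub : (range (min N (blockSize α t))).image (sparsePoint n α j) ⊆
      (sparseSet n α j N).filter fun m => ∀ i, m i / 2 ^ t = 0 := by
    intro m hm
    obtain ⟨k, hk, rfl⟩ := mem_image.1 hm
    have hk := mem_range.1 hk
    refine mem_filter.2 ⟨mem_image_of_mem _ (mem_range.2 (hk.trans_le (min_le_left _ _))),
      fun i => ?_⟩
    rw [sparsePoint_of_lt ht (hk.trans_le (min_le_right _ _))]
    exact Int.ediv_eq_zero_of_lt (sparsePoint_mem t k i).1 (sparsePoint_mem t k i).2
  refine le_of_eq_of_le ?_ (card_le_card hsub)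
  rw [card_image_of_injOn, card_range]
  exact (sparsePoint_injOn hαn j).mono fun k hk =>
    (mem_range.1 hk).trans_le ((min_le_left _ _).trans hN)

lemma card_filter_sparseSet_le (hN : N ≤ blockSize α j) {t : ℕ} (ht : t ≤ j) (K : Fin n → ℤ) :
    #((sparseSet n α j N).filter fun m => ∀ i, m i / 2 ^ t = K i) ≤ min N (blockSize α t) := by
  refine le_min ((card_filter_le _ _).trans (card_image_le.trans (card_range N).le)) ?_
  calc _ ≤ #((range (blockSize α t)).image (sparsePoint n α t)) := by
        refine card_le_card_of_injOn (fun m i => m i % 2 ^ t) ?_ ?_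
        · intro m hm
          obtain ⟨hmA, -⟩ := mem_filter.1 hm
          obtain ⟨k, hk, rfl⟩ := mem_image.1 hmA
          refine mem_image.2 ⟨k % blockSize α t, mem_range.2 (Nat.mod_lt _ (blockSize_pos α t)),
            funext fun i => (sparsePoint_emod ht ((mem_range.1 hk).trans_le hN) i).symm⟩
        · intro m hm m' hm' h
          funext i
          rw [← Int.mul_ediv_add_emod (m i) (2 ^ t), ← Int.mul_ediv_add_emod (m' i) (2 ^ t),
            (mem_filter.1 hm).2 i, (mem_filter.1 hm').2 i]
          exact congrArg _ (congrFun h i)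
    _ ≤ blockSize α t := card_image_le.trans (card_range _).le

end SparseSet

end SparseDyadic

open SparseDyadic

theorem stmt_2_general (n : ℕ) (α : ℝ) (hα0 : 0 < α) (hαn : α < n) :
    ∃ Ctil : ℝ, 1 ≤ Ctil ∧ ∀ j : ℕ, ∃ A : Finset (Fin n → ℤ),
      (∀ m ∈ A, ∀ i, 0 ≤ m i ∧ m i < 2 ^ j) ∧
      A.card = ⌊(2 : ℝ) ^ ((j : ℝ) * α)⌋₊ ∧
      ∀ J : ℕ, J ≤ j →
        ((⌊(2 : ℝ) ^ (((j : ℝ) - (J : ℝ)) * α)⌋₊ : ℝ) ≤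
            ({m | m ∈ A ∧ dyadicCube n j m ⊆ dyadicCube n J 0}.ncard : ℝ) ∧
          ({m | m ∈ A ∧ dyadicCube n j m ⊆ dyadicCube n J 0}.ncard : ℝ) ≤
            Ctil * (2 : ℝ) ^ (((j : ℝ) - (J : ℝ)) * α)) ∧
        ∀ K : Fin n → ℤ, (∀ i, 0 ≤ K i ∧ K i < 2 ^ J) →
          ({m | m ∈ A ∧ dyadicCube n j m ⊆ dyadicCube n J K}.ncard : ℝ) ≤
            2 * ({m | m ∈ A ∧ dyadicCube n j m ⊆ dyadicCube n J 0}.ncard : ℝ) := by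
  refine ⟨2, one_le_two, fun j => ?_⟩
  set N := ⌊(2 : ℝ) ^ ((j : ℝ) * α)⌋₊
  have hN : N ≤ blockSize α j := floor_two_rpow_le_blockSize α j
  refine ⟨sparseSet n α j N, fun m hm => mem_box_of_mem_sparseSet hm,
    card_sparseSet hαn.le hN, fun J hJ => ?_⟩
  set t := j - J
  rw [← Nat.cast_sub hJ]
  have hcount : ∀ K, {m | m ∈ sparseSet n α j N ∧ dyadicCube n j m ⊆ dyadicCube n J K}.ncard =
      #((sparseSet n α j N).filter fun m => ∀ i, m i / 2 ^ t = K i) := fun K => by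
    rw [← Set.ncard_coe_finset, coe_filter]
    simp only [dyadicCube_subset_dyadicCube_iff hJ, t]
  have hfloor : ⌊(2 : ℝ) ^ ((t : ℝ) * α)⌋₊ ≤ min N (blockSize α t) :=
    le_min (Nat.floor_le_floor (by gcongr <;> [norm_num; omega]))
      (floor_two_rpow_le_blockSize α t)
  have hlower := min_le_card_filter_sparseSet hαn.le hN (Nat.sub_le j J)
  simp only [hcount, Pi.zero_apply]
  refine ⟨⟨by exact_mod_cast hfloor.trans hlower, ?_⟩, fun K _ => ?_⟩
  · calc _ ≤ (blockSize α t : ℝ) := by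
          exact_mod_cast (card_filter_sparseSet_le hN (Nat.sub_le j J) 0).trans (min_le_right _ _)
      _ ≤ 2 * 2 ^ ((t : ℝ) * α) := blockSize_le hα0.le t
  · have hK := (card_filter_sparseSet_le hN (Nat.sub_le j J) K).trans hlower
    exact_mod_cast hK.trans (Nat.le_mul_of_pos_left _ two_pos)

theorem stmt_2 (n : ℕ) (hn : 2 ≤ n) (α : ℝ) (hα0 : 0 < α) (hαn : α < n) :
    ∃ Ctil : ℝ, 1 ≤ Ctil ∧ ∀ j : ℕ, ∃ A : Finset (Fin n → ℤ),
      (∀ m ∈ A, ∀ i, 0 ≤ m i ∧ m i < 2 ^ j) ∧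
      A.card = ⌊(2 : ℝ) ^ ((j : ℝ) * α)⌋₊ ∧
      ∀ J : ℕ, J ≤ j →
        ((⌊(2 : ℝ) ^ (((j : ℝ) - (J : ℝ)) * α)⌋₊ : ℝ) ≤
            ({m | m ∈ A ∧ dyadicCube n j m ⊆ dyadicCube n J 0}.ncard : ℝ) ∧
          ({m | m ∈ A ∧ dyadicCube n j m ⊆ dyadicCube n J 0}.ncard : ℝ) ≤
            Ctil * (2 : ℝ) ^ (((j : ℝ) - (J : ℝ)) * α)) ∧
        ∀ K : Fin n → ℤ, (∀ i, 0 ≤ K i ∧ K i < 2 ^ J) →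
          ({m | m ∈ A ∧ dyadicCube n j m ⊆ dyadicCube n J K}.ncard : ℝ) ≤
            2 * ({m | m ∈ A ∧ dyadicCube n j m ⊆ dyadicCube n J 0}.ncard : ℝ) :=
  stmt_2_general n α hα0 hαn
end

section
/- Let $n\ge 2$, $\alpha\in(0,n-1)$, $q\in(0,\infty]$, $p\in(0,\infty]$, $s\in\mathbb{R}$, and suppose for each level $j\in\{j_1,\dots,N\}$ we select exactly $M_j$ dyadic cubes inside $Q_{J,0}$ with $c\,2^{(j-J)\alpha}\le M_{j,J}\le C\,2^{(j-J)\alpha}$ for all $J\le j$ (where $M_{j,J}$ counts selected level-$j$ cubes inside $Q_{J,0}$). Then the sequence quasi-norm $\sup_{J\in\{j_1,\dots,N\}}2^{Jn\tau}\Big(\sum_{j=J}^N 2^{j(s+n/2-n/p)q}\lambda_j^q M_{j,J}^{q/p}\Big)^{1/q}$ with $\tau=\alpha/(np)$ satisfies, uniformly in $N$ and $\{\lambda_j\}$ (nonnegative), the two-sided bound $\asymp\Big(\sum_{j=j_1}^N 2^{j(s+n/2+n\tau-n/p)q}\lambda_j^q\Big)^{1/q}$. -/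
/-!
With `r = 1/p` we have `n τ = α r`, and the two-sided bound on `M j J` gives
`2^{J α r} (M j J)^r ≍ 2^{j α r}` for `J ≤ j`: the exterior factor exactly compensates the
deficiency in the number of cubes. Hence every term of the supremum over `J` is dominated
by the tail from `j1` of the right-hand side, and the term `J = j1` dominates it from below.
-/

open scoped ENNReal

/-- `(∑_{j=J}^N t_j^q)^{1/q}`, with the `sup` interpretation when `q = ∞`. -/
noncomputable def lqTail (q : ℝ≥0∞) (t : ℕ → ℝ≥0∞) (J N : ℕ) : ℝ≥0∞ :=
  if q = ⊤ then ⨆ j ∈ Finset.Icc J N, t j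
  else (∑ j ∈ Finset.Icc J N, t j ^ q.toReal) ^ (1 / q.toReal)

section lqTail

variable {q : ℝ≥0∞}

lemma lqTail_mono {f g : ℕ → ℝ≥0∞} {J N : ℕ} (h : ∀ j ∈ Finset.Icc J N, f j ≤ g j) :
    lqTail q f J N ≤ lqTail q g J N := by
  unfold lqTail
  split
  · exact iSup₂_le fun j hj => (h j hj).trans (le_iSup₂ (f := fun j _ => g j) j hj)
  · exact ENNReal.rpow_le_rpow
      (Finset.sum_le_sum fun j hj => ENNReal.rpow_le_rpow (h j hj) ENNReal.toReal_nonneg)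
      (by positivity)

lemma lqTail_anti_left (f : ℕ → ℝ≥0∞) {J J' N : ℕ} (h : J' ≤ J) :
    lqTail q f J N ≤ lqTail q f J' N := by
  have hsub : Finset.Icc J N ⊆ Finset.Icc J' N := Finset.Icc_subset_Icc_left h
  unfold lqTail
  split
  · exact iSup₂_le fun j hj => le_iSup₂ (f := fun j _ => f j) j (hsub hj)
  · exact ENNReal.rpow_le_rpow (Finset.sum_le_sum_of_subset hsub) (by positivity)

lemma lqTail_const_mul (hq : 0 < q) (a : ℝ≥0∞) (f : ℕ → ℝ≥0∞) (J N : ℕ) :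
    lqTail q (fun j => a * f j) J N = a * lqTail q f J N := by
  unfold lqTail
  split_ifs with htop
  · simp_rw [ENNReal.mul_iSup]
  · have hq0 : q.toReal ≠ 0 := ENNReal.toReal_ne_zero.2 ⟨hq.ne', htop⟩
    simp_rw [ENNReal.mul_rpow_of_nonneg _ _ ENNReal.toReal_nonneg, ← Finset.mul_sum]
    rw [ENNReal.mul_rpow_of_nonneg _ _ (by positivity), ← ENNReal.rpow_mul,
      mul_one_div_cancel hq0, ENNReal.rpow_one]

variable {t : ℕ → ℝ≥0∞} {w : ℕ → ℝ≥0∞} {u : ℕ → ℕ → ℝ≥0∞} {j1 N : ℕ}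

lemma mul_lqTail_le_iSup_mul_lqTail (hq : 0 < q) (hN : j1 ≤ N) {a : ℝ≥0∞}
    (h : ∀ j ∈ Finset.Icc j1 N, a * t j ≤ w j1 * u j1 j) :
    a * lqTail q t j1 N ≤ ⨆ J ∈ Finset.Icc j1 N, w J * lqTail q (u J) J N := by
  refine le_trans ?_ (le_iSup₂ (f := fun J _ => w J * lqTail q (u J) J N) j1
    (Finset.mem_Icc.2 ⟨le_rfl, hN⟩))
  rw [← lqTail_const_mul hq, ← lqTail_const_mul hq]
  exact lqTail_mono h

lemma iSup_mul_lqTail_le_mul_lqTail (hq : 0 < q) {b : ℝ≥0∞}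
    (h : ∀ J ∈ Finset.Icc j1 N, ∀ j ∈ Finset.Icc J N, w J * u J j ≤ b * t j) :
    ⨆ J ∈ Finset.Icc j1 N, w J * lqTail q (u J) J N ≤ b * lqTail q t j1 N := by
  refine iSup₂_le fun J hJ => ?_
  calc w J * lqTail q (u J) J N
      = lqTail q (fun j => w J * u J j) J N := (lqTail_const_mul hq _ _ _ _).symm
    _ ≤ lqTail q (fun j => b * t j) J N := lqTail_mono (h J hJ)
    _ = b * lqTail q t J N := lqTail_const_mul hq _ _ _ _
    _ ≤ b * lqTail q t j1 N := by gcongr; exact lqTail_anti_left t (Finset.mem_Icc.1 hJ).1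

end lqTail

section weights

variable {x a m α r B lam : ℝ}

lemma rpow_mul_mul_rpow_sub_rpow (hx : 0 < x) (ha : 0 ≤ a) (J j : ℝ) :
    x ^ (J * (α * r)) * (a * x ^ ((j - J) * α)) ^ r = a ^ r * x ^ (j * (α * r)) := by
  rw [Real.mul_rpow ha (by positivity), ← Real.rpow_mul hx.le, mul_left_comm,
    ← Real.rpow_add hx]
  ring_nf

lemma rpow_mul_rpow_mul_le (hx : 0 < x) (hr : 0 ≤ r) (ha : 0 ≤ a) (hlam : 0 ≤ lam) {J j : ℝ}
    (h : a * x ^ ((j - J) * α) ≤ m) :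
    a ^ r * (x ^ (j * (B + α * r)) * lam) ≤ x ^ (J * (α * r)) * (x ^ (j * B) * lam * m ^ r) := by
  calc a ^ r * (x ^ (j * (B + α * r)) * lam)
      = x ^ (j * B) * lam * (x ^ (J * (α * r)) * (a * x ^ ((j - J) * α)) ^ r) := by
        rw [rpow_mul_mul_rpow_sub_rpow hx ha, mul_add, Real.rpow_add hx]; ring
    _ ≤ x ^ (j * B) * lam * (x ^ (J * (α * r)) * m ^ r) := by gcongr
    _ = x ^ (J * (α * r)) * (x ^ (j * B) * lam * m ^ r) := by ring

lemma rpow_mul_mul_rpow_le (hx : 0 < x) (hr : 0 ≤ r) (hm : 0 ≤ m) (hlam : 0 ≤ lam) {b J j : ℝ}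
    (hb : 0 ≤ b) (h : m ≤ b * x ^ ((j - J) * α)) :
    x ^ (J * (α * r)) * (x ^ (j * B) * lam * m ^ r) ≤ b ^ r * (x ^ (j * (B + α * r)) * lam) := by
  calc x ^ (J * (α * r)) * (x ^ (j * B) * lam * m ^ r)
      = x ^ (j * B) * lam * (x ^ (J * (α * r)) * m ^ r) := by ring
    _ ≤ x ^ (j * B) * lam * (x ^ (J * (α * r)) * (b * x ^ ((j - J) * α)) ^ r) := by gcongr
    _ = b ^ r * (x ^ (j * (B + α * r)) * lam) := by
        rw [rpow_mul_mul_rpow_sub_rpow hx hb, mul_add, Real.rpow_add hx]; ring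

end weights

theorem stmt_17_general (n : ℕ) (hn : 2 ≤ n) (α : ℝ)
    (p q : ℝ≥0∞) (hq : 0 < q) (s τ : ℝ)
    (hτ : τ = α * (p⁻¹).toReal / n) (j1 : ℕ)
    (M : ℕ → ℕ → ℕ) (c C : ℝ) (hc : 0 < c) (hC : 0 < C)
    (hM : ∀ J j : ℕ, J ≤ j →
      c * (2 : ℝ) ^ (((j : ℝ) - (J : ℝ)) * α) ≤ (M j J : ℝ) ∧
      (M j J : ℝ) ≤ C * (2 : ℝ) ^ (((j : ℝ) - (J : ℝ)) * α)) :
    ∃ c' C' : ℝ, 0 < c' ∧ 0 < C' ∧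
      ∀ N : ℕ, j1 ≤ N → ∀ lam : ℕ → ℝ, (∀ j, 0 ≤ lam j) →
        (ENNReal.ofReal c' *
            lqTail q (fun j => ENNReal.ofReal
              ((2 : ℝ) ^ ((j : ℝ) * (s + (n : ℝ) / 2 + n * τ - n * (p⁻¹).toReal)) * lam j))
              j1 N ≤
          ⨆ J ∈ Finset.Icc j1 N,
            ENNReal.ofReal ((2 : ℝ) ^ ((J : ℝ) * n * τ)) *
              lqTail q (fun j => ENNReal.ofReal
                ((2 : ℝ) ^ ((j : ℝ) * (s + (n : ℝ) / 2 - n * (p⁻¹).toReal)) * lam j *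
                  (M j J : ℝ) ^ (p⁻¹).toReal)) J N) ∧
        (⨆ J ∈ Finset.Icc j1 N,
            ENNReal.ofReal ((2 : ℝ) ^ ((J : ℝ) * n * τ)) *
              lqTail q (fun j => ENNReal.ofReal
                ((2 : ℝ) ^ ((j : ℝ) * (s + (n : ℝ) / 2 - n * (p⁻¹).toReal)) * lam j *
                  (M j J : ℝ) ^ (p⁻¹).toReal)) J N) ≤
          ENNReal.ofReal C' *
            lqTail q (fun j => ENNReal.ofReal
              ((2 : ℝ) ^ ((j : ℝ) * (s + (n : ℝ) / 2 + n * τ - n * (p⁻¹).toReal)) * lam j))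
              j1 N := by
  set r := (p⁻¹).toReal
  have hr : 0 ≤ r := ENNReal.toReal_nonneg
  have hnτ : (n : ℝ) * τ = α * r := by
    have : (n : ℝ) ≠ 0 := by positivity
    rw [hτ]; field_simp
  have hweight (J : ℕ) : (J : ℝ) * n * τ = J * (α * r) := by rw [mul_assoc, hnτ]
  have hexp : s + (n : ℝ) / 2 + n * τ - n * r = (s + (n : ℝ) / 2 - n * r) + α * r := by
    rw [hnτ]; ring
  simp only [hexp, hweight]
  refine ⟨c ^ r, C ^ r, by positivity, by positivity, fun N hN lam hlam => ⟨?_, ?_⟩⟩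
  · refine mul_lqTail_le_iSup_mul_lqTail hq hN fun j hj => ?_
    rw [← ENNReal.ofReal_mul (by positivity), ← ENNReal.ofReal_mul (by positivity)]
    exact ENNReal.ofReal_le_ofReal <| rpow_mul_rpow_mul_le two_pos hr hc.le (hlam j)
      (hM j1 j (Finset.mem_Icc.1 hj).1).1
  · refine iSup_mul_lqTail_le_mul_lqTail hq fun J _ j hj => ?_
    rw [← ENNReal.ofReal_mul (by positivity), ← ENNReal.ofReal_mul (by positivity)]
    exact ENNReal.ofReal_le_ofReal <| rpow_mul_mul_rpow_le two_pos hr (Nat.cast_nonneg _)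
      (hlam j) hC.le (hM J j (Finset.mem_Icc.1 hj).1).2

theorem stmt_17 (n : ℕ) (hn : 2 ≤ n) (α : ℝ) (hα0 : 0 < α) (hα1 : α < (n : ℝ) - 1)
    (p q : ℝ≥0∞) (hp : 0 < p) (hq : 0 < q) (s τ : ℝ)
    (hτ : τ = α * (p⁻¹).toReal / n) (j1 : ℕ)
    (M : ℕ → ℕ → ℕ) (c C : ℝ) (hc : 0 < c) (hC : 0 < C)
    (hM : ∀ J j : ℕ, J ≤ j →
      c * (2 : ℝ) ^ (((j : ℝ) - (J : ℝ)) * α) ≤ (M j J : ℝ) ∧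
      (M j J : ℝ) ≤ C * (2 : ℝ) ^ (((j : ℝ) - (J : ℝ)) * α)) :
    ∃ c' C' : ℝ, 0 < c' ∧ 0 < C' ∧
      ∀ N : ℕ, j1 ≤ N → ∀ lam : ℕ → ℝ, (∀ j, 0 ≤ lam j) →
        (ENNReal.ofReal c' *
            lqTail q (fun j => ENNReal.ofReal
              ((2 : ℝ) ^ ((j : ℝ) * (s + (n : ℝ) / 2 + n * τ - n * (p⁻¹).toReal)) * lam j))
              j1 N ≤
          ⨆ J ∈ Finset.Icc j1 N,
            ENNReal.ofReal ((2 : ℝ) ^ ((J : ℝ) * n * τ)) *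
              lqTail q (fun j => ENNReal.ofReal
                ((2 : ℝ) ^ ((j : ℝ) * (s + (n : ℝ) / 2 - n * (p⁻¹).toReal)) * lam j *
                  (M j J : ℝ) ^ (p⁻¹).toReal)) J N) ∧
        (⨆ J ∈ Finset.Icc j1 N,
            ENNReal.ofReal ((2 : ℝ) ^ ((J : ℝ) * n * τ)) *
              lqTail q (fun j => ENNReal.ofReal
                ((2 : ℝ) ^ ((j : ℝ) * (s + (n : ℝ) / 2 - n * (p⁻¹).toReal)) * lam j *
                  (M j J : ℝ) ^ (p⁻¹).toReal)) J N) ≤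
          ENNReal.ofReal C' *
            lqTail q (fun j => ENNReal.ofReal
              ((2 : ℝ) ^ ((j : ℝ) * (s + (n : ℝ) / 2 + n * τ - n * (p⁻¹).toReal)) * lam j))
              j1 N :=
  stmt_17_general n hn α p q hq s τ hτ j1 M c C hc hC hM
end
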